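/- arXiv:1905.08519 — 2 statements merged into one kernel-verified Lean document; each statement's English description precedes it below -/
import Mathlib

section
/- If K ⊆ L are compact convex subsets of ℝ³, then the surface area of K is at most the surface area of L. -/
/-!
The nearest-point map `p` onto the closed convex set `K` is `1`-Lipschitz, so it does not
increase Hausdorff measure, and it maps `∂L` onto a superset of `∂K`: at `x ∈ ∂K` a supporting
hyperplane gives an outer normal `v`, the ray `x + t • v` (`t ≥ 0`) leaves the bounded set
`L ⊇ K` through a point of `∂L`, and every point of that ray projects to `x`.
-/

open MeasureTheory
open scoped RealInnerProductSpace

lemma exists_nonneg_add_smul_mem_frontier {F : Type*} [NormedAddCommGroup F] [NormedSpace ℝ F]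
    {L : Set F} (hL : Bornology.IsBounded L) {x v : F} (hx : x ∈ L) (hv : v ≠ 0) :
    ∃ t : ℝ, 0 ≤ t ∧ x + t • v ∈ frontier L := by
  obtain ⟨R, hR⟩ := hL.subset_closedBall x
  have hR₀ : 0 ≤ R := by simpa using hR hx
  have hvpos : 0 < ‖v‖ := norm_pos_iff.mpr hv
  have hexit : x + ((R + 1) / ‖v‖) • v ∉ L := fun h => by
    have := hR h
    rw [Metric.mem_closedBall, dist_eq_norm, add_sub_cancel_left, norm_smul,
      Real.norm_of_nonneg (by positivity), div_mul_cancel₀ _ hvpos.ne'] at this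
    linarith
  let ray : Set.Ici (0 : ℝ) → F := fun t => x + (t : ℝ) • v
  have : PreconnectedSpace (Set.Ici (0 : ℝ)) :=
    isPreconnected_iff_preconnectedSpace.mp isPreconnected_Ici
  obtain ⟨t, ht⟩ : (frontier (ray ⁻¹' L)).Nonempty := by
    refine nonempty_frontier_iff.mpr ⟨⟨⟨0, Set.self_mem_Ici⟩, by simpa [ray] using hx⟩, fun h => ?_⟩
    exact hexit (Set.eq_univ_iff_forall.mp h ⟨(R + 1) / ‖v‖, Set.mem_Ici.mpr (by positivity)⟩)
  exact ⟨t, t.2, (by fun_prop : Continuous ray).frontier_preimage_subset L ht⟩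

section NearestPoint

variable {E : Type*} [NormedAddCommGroup E] [InnerProductSpace ℝ E]

lemma norm_sub_le_of_inner_le_zero {u₁ u₂ a b : E} (h₁ : ⟪u₁ - a, b - a⟫ ≤ 0)
    (h₂ : ⟪u₂ - b, a - b⟫ ≤ 0) : ‖a - b‖ ≤ ‖u₁ - u₂‖ := by
  have hsplit : ‖a - b‖ ^ 2 = ⟪u₁ - u₂, a - b⟫ - ⟪u₁ - a, a - b⟫ + ⟪u₂ - b, a - b⟫ := by
    rw [← real_inner_self_eq_norm_sq, ← inner_sub_left, ← inner_add_left]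
    congr 1
    abel
  have hflip : ⟪u₁ - a, b - a⟫ = -⟪u₁ - a, a - b⟫ := by rw [← inner_neg_right, neg_sub]
  have hsq : ‖a - b‖ ^ 2 ≤ ‖u₁ - u₂‖ * ‖a - b‖ := by
    linarith [real_inner_le_norm (u₁ - u₂) (a - b)]
  rcases (norm_nonneg (a - b)).eq_or_lt with h | h
  · exact h ▸ norm_nonneg _
  · nlinarith

/-- For convex `K` this variational inequality characterises `p u` as the point of `K` nearest
to `u` (`norm_eq_iInf_iff_real_inner_le_zero`). -/
def IsNearestPointMap (K : Set E) (p : E → E) : Prop :=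
  ∀ u, p u ∈ K ∧ ∀ w ∈ K, ⟪u - p u, w - p u⟫ ≤ 0

lemma exists_isNearestPointMap {K : Set E} (hK : IsComplete K) (hconv : Convex ℝ K)
    (hne : K.Nonempty) : ∃ p, IsNearestPointMap K p := by
  choose p hpK hpdist using exists_norm_eq_iInf_of_complete_convex hne hK hconv
  exact ⟨p, fun u => ⟨hpK u, (norm_eq_iInf_iff_real_inner_le_zero hconv (hpK u)).mp (hpdist u)⟩⟩

namespace IsNearestPointMap

variable {K : Set E} {p : E → E}

lemma lipschitzWith_one (hp : IsNearestPointMap K p) : LipschitzWith 1 p :=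
  LipschitzWith.of_dist_le_mul fun u₁ u₂ => by
    simpa [dist_eq_norm] using
      norm_sub_le_of_inner_le_zero ((hp u₁).2 _ (hp u₂).1) ((hp u₂).2 _ (hp u₁).1)

lemma apply_eq (hp : IsNearestPointMap K p) {u x : E} (hx : x ∈ K)
    (hux : ∀ w ∈ K, ⟪u - x, w - x⟫ ≤ 0) : p u = x := by
  simpa [sub_eq_zero] using
    norm_sub_le_of_inner_le_zero ((hp u).2 x hx) (hux _ (hp u).1)

lemma frontier_subset_image_frontier [CompleteSpace E] (hp : IsNearestPointMap K p)
    (hKcl : IsClosed K) (hKconv : Convex ℝ K) (hKint : (interior K).Nonempty) {L : Set E}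
    (hL : Bornology.IsBounded L) (hKL : K ⊆ L) : frontier K ⊆ p '' frontier L := by
  intro x hx
  have hxK : x ∈ K := hKcl.frontier_subset hx
  obtain ⟨f, hf0, hfx⟩ := geometric_hahn_banach_of_nonempty_interior_point hKconv hx.2 hKint
  set v := (InnerProductSpace.toDual ℝ E).symm f
  have hv : ∀ w, ⟪v, w⟫ = f w := fun _ => InnerProductSpace.toDual_symm_apply
  have hv0 : v ≠ 0 := by simpa [v] using hf0
  obtain ⟨t, ht, htL⟩ := exists_nonneg_add_smul_mem_frontier hL (hKL hxK) hv0
  refine ⟨x + t • v, htL, hp.apply_eq hxK fun w hw => ?_⟩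
  rw [add_sub_cancel_left, real_inner_smul_left, hv, map_sub]
  exact mul_nonpos_of_nonneg_of_nonpos ht (sub_nonpos.mpr (hfx w hw))

end IsNearestPointMap

end NearestPoint

theorem surfaceArea_mono_of_convex_general (K L : Set (EuclideanSpace ℝ (Fin 3)))
    (hKc : IsCompact K) (hKconv : Convex ℝ K) (hKint : (interior K).Nonempty)
    (hLc : IsCompact L)
    (hKL : K ⊆ L) :
    μH[2] (frontier K) ≤ μH[2] (frontier L) := by
  obtain ⟨p, hp⟩ := exists_isNearestPointMap hKc.isComplete hKconv (hKint.mono interior_subset)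
  calc μH[2] (frontier K)
      ≤ μH[2] (p '' frontier L) :=
        measure_mono <|
          hp.frontier_subset_image_frontier hKc.isClosed hKconv hKint hLc.isBounded hKL
    _ ≤ μH[2] (frontier L) := by
        simpa using hp.lipschitzWith_one.hausdorffMeasure_image_le zero_le_two (frontier L)

/-- Archimedes' Assumption 4: a convex body in ℝ³ included in another has smaller surface area. -/
theorem surfaceArea_mono_of_convex (K L : Set (EuclideanSpace ℝ (Fin 3)))
    (hKc : IsCompact K) (hKconv : Convex ℝ K) (hKint : (interior K).Nonempty)
    (hLc : IsCompact L) (hLconv : Convex ℝ L) (hLint : (interior L).Nonempty)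
    (hKL : K ⊆ L) :
    μH[2] (frontier K) ≤ μH[2] (frontier L) :=
  surfaceArea_mono_of_convex_general K L hKc hKconv hKint hLc hKL
end

section
/- Converse of Ptolemy: four points A, B, C, D in the plane forming a convex quadrilateral in that order lie on a common circle if and only if |AC|·|BD| = |AB|·|CD| + |AD|·|BC|. -/
/-!
Cyclic implies Ptolemy's equality by Mathlib's Ptolemy theorem, the crossing diagonals giving the
straight angles at their intersection. Conversely, invert about `A` with radius `1`: since
`|B'C'| = |BC| / (|AB| |AC|)` and similarly for the other pairs, Ptolemy's equality becomes
`|B'C'| + |C'D'| = |B'D'|`, so `C'` lies between `B'` and `D'`. The inversion maps the circumcircle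
of `ABC` into a line, which contains `B' ≠ C'` and therefore `D'`; hence `D` is on the circle.
-/

open EuclideanGeometry

section Segment

variable {k V : Type*} [Field k] [LinearOrder k] [IsStrictOrderedRing k] [AddCommGroup V]
  [Module k V] {A B C D X : V}

theorem sbtw_of_mem_openSegment (hX : X ∈ openSegment k A C) (hAC : A ≠ C) : Sbtw k A X C :=
  sbtw_iff_mem_image_Ioo_and_ne.2 ⟨openSegment_eq_image_lineMap k A C ▸ hX, hAC⟩

theorem mem_affineSpan_pair_of_mem_openSegment (hX : X ∈ openSegment k A C) :
    X ∈ line[k, A, C] :=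
  (mem_segment_iff_wbtw.1 (openSegment_subset_segment k A C hX)).mem_affineSpan

theorem mem_affineSpan_pair_of_mem_openSegment_of_mem_openSegment
    (hAC : X ∈ openSegment k A C) (hBD : X ∈ openSegment k B D) (hB : B ∈ line[k, A, C]) :
    D ∈ line[k, A, C] := by
  rcases eq_or_ne B D with rfl | hBD'
  · exact hB
  have hBX : B ≠ X := by
    rintro rfl
    exact hBD' (left_mem_openSegment_iff.1 hBD)
  have hBXD : Wbtw k B X D := mem_segment_iff_wbtw.1 (openSegment_subset_segment k B D hBD)
  have hD : D ∈ line[k, B, X] :=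
    hBXD.collinear.mem_affineSpan_of_mem_of_ne (by simp) (by simp) (by simp) hBX
  exact affineSpan_pair_le_of_mem_of_mem hB (mem_affineSpan_pair_of_mem_openSegment hAC) hD

theorem collinear_of_mem_openSegment_of_mem_affineSpan_pair
    (hAC : X ∈ openSegment k A C) (hBD : X ∈ openSegment k B D) (hB : B ∈ line[k, A, C]) :
    Collinear k ({A, B, C, D} : Set V) := by
  have h := collinear_insert_insert_of_mem_affineSpan_pair hB
    (mem_affineSpan_pair_of_mem_openSegment_of_mem_openSegment hAC hBD hB)
  convert h using 1
  ext
  simp only [Set.mem_insert_iff, Set.mem_singleton_iff]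
  tauto

theorem collinear_of_mem_openSegment_of_mem_affineSpan_pair'
    (hAC : X ∈ openSegment k A C) (hBD : X ∈ openSegment k B D) (hA : A ∈ line[k, B, D]) :
    Collinear k ({A, B, C, D} : Set V) := by
  have h := collinear_of_mem_openSegment_of_mem_affineSpan_pair hBD hAC hA
  rwa [Set.insert_comm B A, Set.pair_comm D C] at h

end Segment

theorem wbtw_inversion_of_mul_dist_eq {V P : Type*} [NormedAddCommGroup V]
    [InnerProductSpace ℝ V] [MetricSpace P] [NormedAddTorsor V P] {a b c d : P}
    (hb : b ≠ a) (hc : c ≠ a) (hd : d ≠ a)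
    (h : dist a c * dist b d = dist a b * dist c d + dist a d * dist b c) :
    Wbtw ℝ (inversion a 1 b) (inversion a 1 c) (inversion a 1 d) := by
  rw [← dist_add_dist_eq_iff, dist_inversion_inversion hb hc, dist_inversion_inversion hc hd,
    dist_inversion_inversion hb hd]
  rw [← dist_pos] at hb hc hd
  field_simp
  rw [dist_comm b a, dist_comm c a, dist_comm d a]
  linarith

theorem mem_sphere_of_mul_dist_eq {V P : Type*} [NormedAddCommGroup V] [InnerProductSpace ℝ V]
    [MetricSpace P] [NormedAddTorsor V P] {a b c d : P} {s : Sphere P}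
    (ha : a ∈ s) (hb : b ∈ s) (hc : c ∈ s)
    (hba : b ≠ a) (hca : c ≠ a) (hbc : b ≠ c) (hda : d ≠ a)
    (h : dist a c * dist b d = dist a b * dist c d + dist a d * dist b c) : d ∈ s := by
  have hcenter : s.center ≠ a := by
    rintro rfl
    exact hba (dist_eq_zero.1 (by rw [mem_sphere.1 hb, ← mem_sphere.1 ha, dist_self]))
  set L := AffineSubspace.perpBisector a (inversion a 1 s.center)
  have mem_L_iff : ∀ {x}, x ≠ a → (inversion a 1 x ∈ L ↔ x ∈ s) := fun hx => by
    rw [inversion_mem_perpBisector_inversion_iff one_ne_zero hx hcenter, mem_sphere,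
      ← mem_sphere.1 ha, dist_comm a]
  have hline : line[ℝ, inversion a 1 b, inversion a 1 c] ≤ L :=
    affineSpan_pair_le_of_mem_of_mem ((mem_L_iff hba).2 hb) ((mem_L_iff hca).2 hc)
  refine (mem_L_iff hda).1 (hline ?_)
  exact (wbtw_inversion_of_mul_dist_eq hba hca hda h).collinear.mem_affineSpan_of_mem_of_ne
    (by simp) (by simp) (by simp) ((inversion_injective a one_ne_zero).ne hbc)

/-- Converse of Ptolemy: a (nondegenerate) convex quadrilateral `ABCD`, with diagonals
`AC` and `BD` crossing, is cyclic iff Ptolemy's equality holds. -/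
theorem ptolemy_iff_concyclic (A B C D : EuclideanSpace ℝ (Fin 2))
    (hconv : (openSegment ℝ A C ∩ openSegment ℝ B D).Nonempty)
    (hncol : ¬ Collinear ℝ ({A, B, C, D} : Set (EuclideanSpace ℝ (Fin 2)))) :
    (∃ c r, dist A c = r ∧ dist B c = r ∧ dist C c = r ∧ dist D c = r) ↔
      dist A C * dist B D = dist A B * dist C D + dist A D * dist B C := by
  obtain ⟨X, hXAC, hXBD⟩ := hconv
  have hAC : A ≠ C := by
    rintro rfl
    obtain rfl : X = A := by simpa using hXAC
    exact hncol (collinear_of_mem_openSegment_of_mem_affineSpan_pair' hXAC hXBD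
      (mem_affineSpan_pair_of_mem_openSegment hXBD))
  have hBD : B ≠ D := by
    rintro rfl
    obtain rfl : X = B := by simpa using hXBD
    exact hncol (collinear_of_mem_openSegment_of_mem_affineSpan_pair hXAC hXBD
      (mem_affineSpan_pair_of_mem_openSegment hXAC))
  have hABC : ¬ Collinear ℝ ({A, B, C} : Set (EuclideanSpace ℝ (Fin 2))) := fun h =>
    hncol (collinear_of_mem_openSegment_of_mem_affineSpan_pair hXAC hXBD
      (h.mem_affineSpan_of_mem_of_ne (by simp) (by simp) (by simp) hAC))
  have hDA : D ≠ A := by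
    rintro rfl
    exact hncol (collinear_of_mem_openSegment_of_mem_affineSpan_pair' hXAC hXBD
      (right_mem_affineSpan_pair ℝ B D))
  constructor
  · rintro ⟨o, r, hA, hB, hC, hD⟩
    have hcos : Cospherical ({A, B, C, D} : Set (EuclideanSpace ℝ (Fin 2))) :=
      ⟨o, r, by simp [hA, hB, hC, hD]⟩
    have := mul_dist_add_mul_dist_eq_mul_dist_of_cospherical hcos
      (angle_eq_pi_iff_sbtw.2 (sbtw_of_mem_openSegment hXAC hAC))
      (angle_eq_pi_iff_sbtw.2 (sbtw_of_mem_openSegment hXBD hBD))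
    rw [dist_comm D A] at this
    linarith
  · intro h
    let T : Affine.Triangle ℝ (EuclideanSpace ℝ (Fin 2)) :=
      ⟨![A, B, C], affineIndependent_iff_not_collinear_set.2 hABC⟩
    have hD : D ∈ T.circumsphere := mem_sphere_of_mul_dist_eq (T.mem_circumsphere 0)
      (T.mem_circumsphere 1) (T.mem_circumsphere 2) (ne₁₂_of_not_collinear hABC).symm
      hAC.symm (ne₂₃_of_not_collinear hABC) hDA h
    exact ⟨_, _, T.mem_circumsphere 0, T.mem_circumsphere 1, T.mem_circumsphere 2, hD⟩
end
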